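/- arXiv:1909.08144 — 5 statements merged into one kernel-verified Lean document; each statement's English description precedes it below -/
import Mathlib

section
/- Let G₁ be a double Lie groupoid with side groupoids M₁ ⇉ M₀ (horizontal) and G₀ ⇉ M₀ (vertical), where G₁ carries two groupoid structures: one over M₁ and one over G₀. If g, h ∈ G₁ satisfy s^{M₁}(g) = s^{M₁}(h) = u for a unit u ∈ M₀ ⊂ M₁, and the elements x = t^{G₀}(g) and y = t^{G₀}(h) of M₁ are composable in M₁ ⇉ M₀, then there exists an element l ∈ G₁ with s^{M₁}(l) = u and t^{G₀}(l) = m_{M₁}(x, y). Consequently, the G₁-orbit (under reachability by arrows of both groupoid structures) of the set of units of M₁ is closed under the multiplication of M₁ ⇉ M₀, i.e. it is a subgroupoid of M₁. -/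
/-- A purely algebraic (set-theoretic) groupoid with arrow set `Arr` over object set `Obj`.
The composition `comp a b` is only meaningful when `s a = t b`. -/
structure AlgGroupoid (Arr Obj : Type*) where
  s : Arr → Obj
  t : Arr → Obj
  comp : Arr → Arr → Arr
  unit : Obj → Arr
  inv : Arr → Arr
  s_unit : ∀ p, s (unit p) = p
  t_unit : ∀ p, t (unit p) = p
  s_comp : ∀ a b, s a = t b → s (comp a b) = s b
  t_comp : ∀ a b, s a = t b → t (comp a b) = t a
  comp_assoc : ∀ a b c, s a = t b → s b = t c → comp (comp a b) c = comp a (comp b c)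
  comp_unit : ∀ a, comp a (unit (s a)) = a
  unit_comp : ∀ a, comp (unit (t a)) a = a
  s_inv : ∀ a, s (inv a) = t a
  t_inv : ∀ a, t (inv a) = s a
  comp_inv : ∀ a, comp a (inv a) = unit (t a)
  inv_comp : ∀ a, comp (inv a) a = unit (s a)

/-- A purely algebraic double groupoid: a groupoid object in the category of groupoids,
with total set of squares `G1`, side groupoids `M1 ⇉ M0` (horizontal, `H`) and
`G0 ⇉ M0` (vertical, `V`), and two groupoid structures on `G1`: one over `G0`
(the structure "in the `M1`-direction", maps denoted `s^{M1}`, `t^{M1}`) and one over `M1`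
(the structure "in the `G0`-direction", maps denoted `s^{G0}`, `t^{G0}`).  Each structure
map of one groupoid structure is a morphism for the other one. -/
structure AlgDoubleGroupoid (G1 M1 G0 M0 : Type*) where
  H : AlgGroupoid M1 M0
  V : AlgGroupoid G0 M0
  /-- the groupoid structure `G1 ⇉ G0`, with source and target `s^{M1}`, `t^{M1}` -/
  SM1 : AlgGroupoid G1 G0
  /-- the groupoid structure `G1 ⇉ M1`, with source and target `s^{G0}`, `t^{G0}` -/
  SG0 : AlgGroupoid G1 M1
  corner_ss : ∀ g, H.s (SG0.s g) = V.s (SM1.s g)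
  corner_ts : ∀ g, H.t (SG0.s g) = V.s (SM1.t g)
  corner_st : ∀ g, H.s (SG0.t g) = V.t (SM1.s g)
  corner_tt : ∀ g, H.t (SG0.t g) = V.t (SM1.t g)
  -- `s^{G0}` and `t^{G0}` are groupoid morphisms `(G1 ⇉ G0) → (M1 ⇉ M0)`
  sG0_comp : ∀ g h, SM1.s g = SM1.t h → SG0.s (SM1.comp g h) = H.comp (SG0.s g) (SG0.s h)
  tG0_comp : ∀ g h, SM1.s g = SM1.t h → SG0.t (SM1.comp g h) = H.comp (SG0.t g) (SG0.t h)
  sG0_unit : ∀ a : G0, SG0.s (SM1.unit a) = H.unit (V.s a)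
  tG0_unit : ∀ a : G0, SG0.t (SM1.unit a) = H.unit (V.t a)
  -- `s^{M1}` and `t^{M1}` are groupoid morphisms `(G1 ⇉ M1) → (G0 ⇉ M0)`
  sM1_comp : ∀ g h, SG0.s g = SG0.t h → SM1.s (SG0.comp g h) = V.comp (SM1.s g) (SM1.s h)
  tM1_comp : ∀ g h, SG0.s g = SG0.t h → SM1.t (SG0.comp g h) = V.comp (SM1.t g) (SM1.t h)
  sM1_unit : ∀ x : M1, SM1.s (SG0.unit x) = V.unit (H.s x)
  tM1_unit : ∀ x : M1, SM1.t (SG0.unit x) = V.unit (H.t x)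
  -- the unit maps are morphisms of the side groupoids
  unit_SM1_comp : ∀ a b : G0, V.s a = V.t b →
    SM1.unit (V.comp a b) = SG0.comp (SM1.unit a) (SM1.unit b)
  unit_SG0_comp : ∀ x y : M1, H.s x = H.t y →
    SG0.unit (H.comp x y) = SM1.comp (SG0.unit x) (SG0.unit y)
  -- interchange law
  interchange : ∀ g h k l,
    SM1.s g = SM1.t k → SM1.s h = SM1.t l → SG0.s g = SG0.t h → SG0.s k = SG0.t l →
    SM1.comp (SG0.comp g h) (SG0.comp k l) = SG0.comp (SM1.comp g k) (SM1.comp h l)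

/-- In a double groupoid, if `g, h ∈ G₁` have `s^{M₁}`-source the unit over
`u ∈ M₀` and the targets `x = t^{G₀}(g)`, `y = t^{G₀}(h)` are composable in `M₁ ⇉ M₀`, then
there is `l ∈ G₁` with `s^{M₁}(l)` the unit over `u` and `t^{G₀}(l) = m_{M₁}(x, y)`.
Consequently the `G₁`-orbit (reachability by arrows of `G₁`) of the set of units of `M₁`
is closed under the multiplication of `M₁ ⇉ M₀`, i.e. it is a subgroupoid of `M₁`. -/
theorem double_groupoid_orbit_of_units_is_subgroupoid
    {G1 M1 G0 M0 : Type*} (D : AlgDoubleGroupoid G1 M1 G0 M0) :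
    (∀ (g h : G1) (u : M0),
      D.SM1.s g = D.V.unit u → D.SM1.s h = D.V.unit u →
      D.H.s (D.SG0.t g) = D.H.t (D.SG0.t h) →
      ∃ l : G1, D.SM1.s l = D.V.unit u ∧
        D.SG0.t l = D.H.comp (D.SG0.t g) (D.SG0.t h)) ∧
    (∀ x y : M1,
      x ∈ {z : M1 | ∃ p : M0,
        Relation.EqvGen (fun a b : M1 => ∃ g : G1, D.SG0.s g = a ∧ D.SG0.t g = b)
          (D.H.unit p) z} →
      y ∈ {z : M1 | ∃ p : M0,
        Relation.EqvGen (fun a b : M1 => ∃ g : G1, D.SG0.s g = a ∧ D.SG0.t g = b)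
          (D.H.unit p) z} →
      D.H.s x = D.H.t y →
      D.H.comp x y ∈ {z : M1 | ∃ p : M0,
        Relation.EqvGen (fun a b : M1 => ∃ g : G1, D.SG0.s g = a ∧ D.SG0.t g = b)
          (D.H.unit p) z}) := by
  constructor
  · -- Statement 0, first part
    intro g h u hg hh hxy
    have hsx : D.H.s (D.SG0.t g) = u := by rw [D.corner_st, hg, D.V.t_unit]
    have hsy : D.H.s (D.SG0.t h) = u := by rw [D.corner_st, hh, D.V.t_unit]
    have hty : D.H.t (D.SG0.t h) = u := by rw [← hxy, hsx]
    have hc : D.SM1.s g = D.SM1.t (D.SG0.unit (D.SG0.t h)) := by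
      rw [D.tM1_unit, hty, hg]
    refine ⟨D.SM1.comp g (D.SG0.unit (D.SG0.t h)), ?_, ?_⟩
    · rw [D.SM1.s_comp _ _ hc, D.sM1_unit, hsy]
    · rw [D.tG0_comp _ _ hc, D.SG0.t_unit]
  · -- the relation is already an equivalence relation
    have hequiv : Equivalence (fun a b : M1 => ∃ g : G1, D.SG0.s g = a ∧ D.SG0.t g = b) := by
      refine ⟨fun a => ⟨D.SG0.unit a, D.SG0.s_unit a, D.SG0.t_unit a⟩, ?_, ?_⟩
      · rintro a b ⟨g, hs, ht⟩
        exact ⟨D.SG0.inv g, by rw [D.SG0.s_inv, ht], by rw [D.SG0.t_inv, hs]⟩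
      · rintro a b c ⟨g, hs, ht⟩ ⟨h, hs', ht'⟩
        have hcb : D.SG0.s h = D.SG0.t g := by rw [hs', ht]
        exact ⟨D.SG0.comp h g, by rw [D.SG0.s_comp _ _ hcb, hs],
          by rw [D.SG0.t_comp _ _ hcb, ht']⟩
    rintro x y ⟨p, hx⟩ ⟨q, hy⟩ hxy
    obtain ⟨gx, hgxs, hgxt⟩ := hequiv.eqvGen_iff.mp hx
    obtain ⟨gy, hgys, hgyt⟩ := hequiv.eqvGen_iff.mp hy
    -- notation for the vertical edges
    set c := D.SM1.s gx with hc
    set d := D.SM1.t gy with hd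
    have hVtc : D.V.t c = D.H.s x := by rw [hc, ← D.corner_st, hgxt]
    have hVsc : D.V.s c = p := by rw [hc, ← D.corner_ss, hgxs, D.H.s_unit]
    have hVtd : D.V.t d = D.H.t y := by rw [hd, ← D.corner_tt, hgyt]
    have hVsd : D.V.s d = q := by rw [hd, ← D.corner_ts, hgys, D.H.t_unit]
    -- the correcting vertical arrow e : p → q
    set e := D.V.comp (D.V.inv d) c with he
    have hce : D.V.s (D.V.inv d) = D.V.t c := by rw [D.V.s_inv, hVtd, ← hxy, hVtc]
    have hVte : D.V.t e = q := by rw [he, D.V.t_comp _ _ hce, D.V.t_inv, hVsd]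
    have hVse : D.V.s e = p := by rw [he, D.V.s_comp _ _ hce, hVsc]
    -- the translated square gy' := gy ∘_V (unit square on e)
    have hcomp1 : D.SG0.s gy = D.SG0.t (D.SM1.unit e) := by
      rw [D.tG0_unit, hVte, hgys]
    set gy' := D.SG0.comp gy (D.SM1.unit e) with hgy'
    have hgy't : D.SG0.t gy' = y := by rw [hgy', D.SG0.t_comp _ _ hcomp1, hgyt]
    have hgy's : D.SG0.s gy' = D.H.unit p := by
      rw [hgy', D.SG0.s_comp _ _ hcomp1, D.sG0_unit, hVse]
    have hgy'M1t : D.SM1.t gy' = c := by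
      rw [hgy', D.tM1_comp _ _ hcomp1, D.SM1.t_unit, ← hd, he,
        ← D.V.comp_assoc _ _ _ (D.V.t_inv d).symm hce, D.V.comp_inv, hVtd, ← hxy,
        ← hVtc, D.V.unit_comp]
    -- the horizontal composite
    have hcomp2 : D.SM1.s gx = D.SM1.t gy' := by rw [hgy'M1t, hc]
    refine ⟨p, Relation.EqvGen.rel _ _ ⟨D.SM1.comp gx gy', ?_, ?_⟩⟩
    · rw [D.sG0_comp _ _ hcomp2, hgxs, hgy's]
      have : D.H.s (D.H.unit p) = D.H.t (D.H.unit p) := by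
        rw [D.H.s_unit, D.H.t_unit]
      nth_rewrite 2 [show D.H.unit p = D.H.unit (D.H.s (D.H.unit p)) by rw [D.H.s_unit]]
      exact D.H.comp_unit _
    · rw [D.tG0_comp _ _ hcomp2, hgxt, hgy't]
end

section
/- Let G₁ be a double groupoid with sides M₁ and G₀ over M₀ (a groupoid object in groupoids). Define, for x, y ∈ M₁, the relation x ∼ y iff there exists g ∈ G₁ with s^{G₀}(g) = x and t^{G₀}(g) = y, or x and y lie in the same orbit of the combined action. Then the equivalence classes (orbits) of units of M₁ under the subgroupoid generated by both groupoid structures on G₁ are, together with the restricted multiplication of M₁ ⇉ M₀, themselves groupoids over the corresponding G₀-orbits in M₀. -/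
section Aux

variable {Arr Obj : Type*}

/-- Uniqueness of right inverses in an algebraic groupoid. -/
theorem AlgGroupoid.inv_unique (G : AlgGroupoid Arr Obj) {a b : Arr}
    (hs : G.s a = G.t b) (h : G.comp a b = G.unit (G.t a)) : b = G.inv a := by
  calc b = G.comp (G.unit (G.s a)) b := by rw [hs, G.unit_comp]
  _ = G.comp (G.comp (G.inv a) a) b := by rw [G.inv_comp]
  _ = G.comp (G.inv a) (G.comp a b) := G.comp_assoc _ _ _ (G.s_inv a) hs
  _ = G.comp (G.inv a) (G.unit (G.t a)) := by rw [h]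
  _ = G.inv a := by rw [← G.s_inv a, G.comp_unit]

/-- The inverse of a unit is itself. -/
theorem AlgGroupoid.inv_unit (G : AlgGroupoid Arr Obj) (p : Obj) :
    G.inv (G.unit p) = G.unit p := by
  refine (G.inv_unique ?_ ?_).symm
  · rw [G.s_unit, G.t_unit]
  · rw [G.t_unit]
    have := G.comp_unit (G.unit p)
    rwa [G.s_unit] at this

/-- `EqvGen` of a functional relation-homomorphism image. -/
theorem eqvGen_map {α β : Type*} {r : α → α → Prop} {r' : β → β → Prop} (f : α → β)
    (hf : ∀ a b, r a b → r' (f a) (f b)) {a b : α} (h : Relation.EqvGen r a b) :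
    Relation.EqvGen r' (f a) (f b) := by
  induction h with
  | rel a b h => exact .rel _ _ (hf a b h)
  | refl a => exact .refl _
  | symm _ _ _ ih => exact .symm _ _ ih
  | trans _ _ _ _ _ ih1 ih2 => exact .trans _ _ _ ih1 ih2

/-- `EqvGen` of an equivalence relation collapses to the relation itself. -/
theorem eqvGen_of_equivalence {α : Type*} {r : α → α → Prop} (h : Equivalence r) {a b : α}
    (hab : Relation.EqvGen r a b) : r a b := by
  induction hab with
  | rel _ _ h' => exact h'
  | refl a => exact h.refl a
  | symm _ _ _ ih => exact h.symm ih
  | trans _ _ _ _ _ ih1 ih2 => exact h.trans ih1 ih2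

variable {G1 M1 G0 M0 : Type*} (D : AlgDoubleGroupoid G1 M1 G0 M0)

/-- `s^{G0}` preserves `SM1`-inverses. -/
theorem AlgDoubleGroupoid.sG0_inv (g : G1) :
    D.SG0.s (D.SM1.inv g) = D.H.inv (D.SG0.s g) := by
  refine D.H.inv_unique ?_ ?_
  · rw [D.corner_ss, D.corner_ts, D.SM1.t_inv]
  · have hc : D.SM1.s g = D.SM1.t (D.SM1.inv g) := (D.SM1.t_inv g).symm
    rw [← D.sG0_comp g (D.SM1.inv g) hc, D.SM1.comp_inv, D.sG0_unit, D.corner_ts]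

/-- `t^{G0}` preserves `SM1`-inverses. -/
theorem AlgDoubleGroupoid.tG0_inv (g : G1) :
    D.SG0.t (D.SM1.inv g) = D.H.inv (D.SG0.t g) := by
  refine D.H.inv_unique ?_ ?_
  · rw [D.corner_st, D.corner_tt, D.SM1.t_inv]
  · have hc : D.SM1.s g = D.SM1.t (D.SM1.inv g) := (D.SM1.t_inv g).symm
    rw [← D.tG0_comp g (D.SM1.inv g) hc, D.SM1.comp_inv, D.tG0_unit, D.corner_tt]

/-- The orbit relation of a groupoid is an equivalence relation. -/
theorem AlgGroupoid.orbitRel_equivalence (G : AlgGroupoid Arr Obj) :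
    Equivalence (fun a b : Obj => ∃ c : Arr, G.s c = a ∧ G.t c = b) := by
  constructor
  · exact fun a => ⟨G.unit a, G.s_unit a, G.t_unit a⟩
  · rintro a b ⟨c, rfl, rfl⟩
    exact ⟨G.inv c, G.s_inv c, G.t_inv c⟩
  · rintro a b c ⟨g, rfl, rfl⟩ ⟨h, hs, rfl⟩
    exact ⟨G.comp h g, by rw [G.s_comp h g hs], by rw [G.t_comp h g hs]⟩

end Aux

/-- In a double groupoid with sides `M₁` and `G₀` over `M₀`, the orbit of a
unit of `M₁` under the (equivalence relation generated by the) relation `x ∼ y` iff there is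
`g ∈ G₁` with `s^{G₀}(g) = x` and `t^{G₀}(g) = y`, endowed with the restricted multiplication
of `M₁ ⇉ M₀`, is itself a groupoid over the corresponding `G₀`-orbit in `M₀`: source and
target of the orbit land in the `G₀`-orbit of the base point, the orbit contains the units
over the `G₀`-orbit, and it is closed under multiplication and inversion. -/
theorem double_groupoid_orbit_of_unit_is_groupoid_over_base_orbit
    {G1 M1 G0 M0 : Type*} (D : AlgDoubleGroupoid G1 M1 G0 M0) (p0 : M0) :
    -- the `G₀`-orbit of `p0` in `M₀`
    let O0 : Set M0 := {p : M0 |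
      Relation.EqvGen (fun a b : M0 => ∃ c : G0, D.V.s c = a ∧ D.V.t c = b) p0 p}
    -- the `G₁`-orbit of the unit `u(p0) ∈ M₁`
    let Ohat : Set M1 := {z : M1 |
      Relation.EqvGen (fun a b : M1 => ∃ g : G1, D.SG0.s g = a ∧ D.SG0.t g = b)
        (D.H.unit p0) z}
    (∀ x ∈ Ohat, D.H.s x ∈ O0 ∧ D.H.t x ∈ O0) ∧
    (∀ p ∈ O0, D.H.unit p ∈ Ohat) ∧
    (∀ x ∈ Ohat, ∀ y ∈ Ohat, D.H.s x = D.H.t y → D.H.comp x y ∈ Ohat) ∧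
    (∀ x ∈ Ohat, D.H.inv x ∈ Ohat) := by
  intro O0 Ohat
  -- the one-step relations are equivalence relations
  have hR : Equivalence (fun a b : M1 => ∃ g : G1, D.SG0.s g = a ∧ D.SG0.t g = b) :=
    D.SG0.orbitRel_equivalence
  have memOhat : ∀ z : M1, z ∈ Ohat ↔
      ∃ g : G1, D.SG0.s g = D.H.unit p0 ∧ D.SG0.t g = z := by
    intro z
    constructor
    · exact fun h => eqvGen_of_equivalence hR h
    · exact fun h => Relation.EqvGen.rel _ _ h
  refine ⟨?_, ?_, ?_, ?_⟩
  · -- source and target land in the base orbit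
    intro x hx
    constructor
    · have := eqvGen_map (r' := fun a b : M0 => ∃ c : G0, D.V.s c = a ∧ D.V.t c = b)
        D.H.s ?_ hx
      · rwa [D.H.s_unit] at this
      · rintro a b ⟨g, rfl, rfl⟩
        exact ⟨D.SM1.s g, (D.corner_ss g).symm, (D.corner_st g).symm⟩
    · have := eqvGen_map (r' := fun a b : M0 => ∃ c : G0, D.V.s c = a ∧ D.V.t c = b)
        D.H.t ?_ hx
      · rwa [D.H.t_unit] at this
      · rintro a b ⟨g, rfl, rfl⟩
        exact ⟨D.SM1.t g, (D.corner_ts g).symm, (D.corner_tt g).symm⟩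
  · -- units over the base orbit belong to the orbit
    intro p hp
    exact eqvGen_map (r' := fun a b : M1 => ∃ g : G1, D.SG0.s g = a ∧ D.SG0.t g = b)
      D.H.unit (by
        rintro a b ⟨c, rfl, rfl⟩
        exact ⟨D.SM1.unit c, D.sG0_unit c, D.tG0_unit c⟩) hp
  · -- closure under multiplication
    intro x hx y hy hst
    obtain ⟨g, hg1, hg2⟩ := (memOhat x).1 hx
    obtain ⟨h, hh1, hh2⟩ := (memOhat y).1 hy
    -- corner identities
    have f1 : D.V.s (D.SM1.s g) = p0 := by rw [← D.corner_ss, hg1, D.H.s_unit]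
    have f2 : D.V.t (D.SM1.s g) = D.H.s x := by rw [← D.corner_st, hg2]
    have f3 : D.V.s (D.SM1.t h) = p0 := by rw [← D.corner_ts, hh1, D.H.t_unit]
    have f4 : D.V.t (D.SM1.t h) = D.H.s x := by rw [← D.corner_tt, hh2, hst]
    -- the correcting arrow `e`
    set c := D.SM1.s g with hc
    set c' := D.SM1.t h with hc'
    have ce : D.V.s (D.V.inv c) = D.V.t c' := by rw [D.V.s_inv, f2, f4]
    set e := D.V.comp (D.V.inv c) c' with he
    have hes : D.V.s e = p0 := by rw [he, D.V.s_comp _ _ ce, f3]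
    have het : D.V.t e = p0 := by rw [he, D.V.t_comp _ _ ce, D.V.t_inv, f1]
    -- the correcting square `m`
    set m := D.SM1.unit e with hm
    have cm : D.SG0.s g = D.SG0.t m := by rw [hm, D.tG0_unit, het, hg1]
    -- the corrected square `g'`
    set g' := D.SG0.comp g m with hg'
    have hg's : D.SG0.s g' = D.H.unit p0 := by
      rw [hg', D.SG0.s_comp g m cm, hm, D.sG0_unit, hes]
    have hg't : D.SG0.t g' = x := by rw [hg', D.SG0.t_comp g m cm, hg2]
    have hg'M : D.SM1.s g' = c' := by
      have hsm : D.SM1.s m = e := by rw [hm, D.SM1.s_unit]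
      have h1 : D.SM1.s g' = D.V.comp c e := by rw [hg', D.sM1_comp g m cm, hsm]
      have h2 : D.V.s c = D.V.t (D.V.inv c) := (D.V.t_inv c).symm
      rw [h1, he, ← D.V.comp_assoc c (D.V.inv c) c' h2 ce, D.V.comp_inv, f2, ← f4,
        D.V.unit_comp]
    -- the composed square `k`
    have ck : D.SM1.s g' = D.SM1.t h := by rw [hg'M]
    refine (memOhat _).2 ⟨D.SM1.comp g' h, ?_, ?_⟩
    · rw [D.sG0_comp g' h ck, hg's, hh1]
      have := D.H.comp_unit (D.H.unit p0)
      rwa [D.H.s_unit] at this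
    · rw [D.tG0_comp g' h ck, hg't, hh2]
  · -- closure under inversion
    intro x hx
    obtain ⟨g, hg1, hg2⟩ := (memOhat x).1 hx
    refine (memOhat _).2 ⟨D.SM1.inv g, ?_, ?_⟩
    · rw [D.sG0_inv, hg1, D.H.inv_unit]
    · rw [D.tG0_inv, hg2]
end

section
/- Let φ : 𝔥 → 𝔤 be a crossed module of Lie algebras, with 𝔤 acting on 𝔥 by derivations such that φ(x · a) = [x, φ(a)] and φ(a) · b = [a, b] for x ∈ 𝔤, a, b ∈ 𝔥. Then the semidirect product Lie algebra 𝔥 ⋊ 𝔤, with source map s(a, x) = x, target map t(a, x) = φ(a) + x, unit map u(x) = (0, x), and multiplication m((a, φ(b) + x), (b, x)) = (a + b, x), is a groupoid over 𝔤 in which all structure maps are Lie algebra morphisms. -/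
/-!
The bracket on `𝔥 × 𝔤` is that of Mathlib's semidirect sum `𝔥 ⋊ 𝔤` for the action of `𝔤` on `𝔥`
by derivations, packaged as a Lie algebra morphism `𝔤 → Der 𝔥`; this gives the Jacobi identity.
The groupoid is the action groupoid of `(𝔥, +)` acting on `𝔤` by `x ↦ φ a + x`. The target map is a
Lie algebra morphism by the equivariance of `φ`, and composition commutes with the bracket because
the Peiffer identity turns the cross terms `φ(b) · a'` produced by `s = t` into brackets in `𝔥`.
-/

section

open LieAlgebra

variable {R H G : Type*} [CommRing R] [LieRing H] [LieAlgebra R H] [LieRing G] [LieAlgebra R G]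

def lieDerivationHomOfAction (ρ : G →ₗ[R] H →ₗ[R] H)
    (hder : ∀ (x : G) (a b : H), ρ x ⁅a, b⁆ = ⁅ρ x a, b⁆ + ⁅a, ρ x b⁆)
    (hact : ∀ (x y : G) (a : H), ρ ⁅x, y⁆ a = ρ x (ρ y a) - ρ y (ρ x a)) :
    G →ₗ⁅R⁆ LieDerivation R H H where
  toFun x :=
    { toLinearMap := ρ x
      leibniz' a b := by rw [hder, ← lie_skew b, sub_neg_eq_add, add_comm] }
  map_add' _ _ := by ext; simp
  map_smul' _ _ := by ext; simp
  map_lie' {_ _} := by ext; simp [hact]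

def semidirectBracket (ρ : G →ₗ[R] H →ₗ[R] H) (p q : H × G) : H × G :=
  (⁅p.1, q.1⁆ + ρ p.2 q.1 - ρ q.2 p.1, ⁅p.2, q.2⁆)

def groupoidTarget (φ : H →ₗ⁅R⁆ G) (p : H × G) : G :=
  φ p.1 + p.2

def groupoidComp (p q : H × G) : H × G :=
  (p.1 + q.1, q.2)

section Bracket

variable (ρ : G →ₗ[R] H →ₗ[R] H)

theorem semidirectBracket_self (p : H × G) : semidirectBracket ρ p p = 0 := by
  simp [semidirectBracket]

theorem semidirectBracket_anticomm (p q : H × G) :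
    semidirectBracket ρ p q = -semidirectBracket ρ q p := by
  simp only [semidirectBracket, Prod.neg_mk, ← lie_skew q.1 p.1, ← lie_skew q.2 p.2]
  congr 1 <;> abel

variable {ρ}

theorem toProd_lie_eq_semidirectBracket {ψ : G →ₗ⁅R⁆ LieDerivation R H H}
    (hψ : ∀ x a, ψ x a = ρ x a) (x y : H ⋊⁅ψ⁆ G) :
    SemiDirectSum.toProd ⁅x, y⁆ =
      semidirectBracket ρ (SemiDirectSum.toProd x) (SemiDirectSum.toProd y) := by
  simp [semidirectBracket, hψ]

theorem semidirectBracket_leibniz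
    (hder : ∀ (x : G) (a b : H), ρ x ⁅a, b⁆ = ⁅ρ x a, b⁆ + ⁅a, ρ x b⁆)
    (hact : ∀ (x y : G) (a : H), ρ ⁅x, y⁆ a = ρ x (ρ y a) - ρ y (ρ x a)) (p q r : H × G) :
    semidirectBracket ρ p (semidirectBracket ρ q r) =
      semidirectBracket ρ (semidirectBracket ρ p q) r +
        semidirectBracket ρ q (semidirectBracket ρ p r) := by
  let ψ := lieDerivationHomOfAction ρ hder hact
  let e := SemiDirectSum.toProd (ψ := ψ)
  obtain ⟨x, rfl⟩ := e.surjective p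
  obtain ⟨y, rfl⟩ := e.surjective q
  obtain ⟨z, rfl⟩ := e.surjective r
  simp only [e, ← toProd_lie_eq_semidirectBracket (ψ := ψ) fun _ _ ↦ rfl]
  rw [leibniz_lie]
  rfl

end Bracket

theorem groupoidTarget_groupoidComp {φ : H →ₗ⁅R⁆ G} {p q : H × G} (h : p.2 = groupoidTarget φ q) :
    groupoidTarget φ (groupoidComp p q) = groupoidTarget φ p := by
  simp only [groupoidTarget, groupoidComp, h, map_add, add_assoc]

section CrossedModule

variable {φ : H →ₗ⁅R⁆ G} {ρ : G →ₗ[R] H →ₗ[R] H}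

theorem groupoidTarget_semidirectBracket (hequiv : ∀ (x : G) (a : H), φ (ρ x a) = ⁅x, φ a⁆)
    (p q : H × G) :
    groupoidTarget φ (semidirectBracket ρ p q) = ⁅groupoidTarget φ p, groupoidTarget φ q⁆ := by
  simp only [groupoidTarget, semidirectBracket, map_sub, map_add, hequiv, LieHom.map_lie,
    lie_add, add_lie, ← lie_skew q.2 (φ p.1)]
  abel

theorem groupoidComp_semidirectBracket (hpeiffer : ∀ a b : H, ρ (φ a) b = ⁅a, b⁆)
    {p q p' q' : H × G} (h : p.2 = groupoidTarget φ q) (h' : p'.2 = groupoidTarget φ q') :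
    groupoidComp (semidirectBracket ρ p p') (semidirectBracket ρ q q') =
      semidirectBracket ρ (groupoidComp p q) (groupoidComp p' q') := by
  simp only [groupoidComp, semidirectBracket, groupoidTarget, h, h', map_add,
    LinearMap.add_apply, hpeiffer, lie_add, add_lie, Prod.mk.injEq, and_true]
  rw [← lie_skew q'.1 p.1]
  abel

end CrossedModule

end

/-- For a crossed module of Lie algebras `φ : 𝔥 → 𝔤` (with `𝔤` acting on `𝔥`
by derivations satisfying `φ(x·a) = [x, φ a]` and `φ(a)·b = [a,b]`), the semidirect product
bracket on `𝔥 × 𝔤`, together with the source `s(a,x) = x`, target `t(a,x) = φ a + x`, unit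
`u(x) = (0,x)` and multiplication `m((a, φ b + x), (b, x)) = (a + b, x)`, is a groupoid over
`𝔤` all of whose structure maps are Lie algebra morphisms (and the semidirect bracket is a
Lie bracket). -/
theorem crossedModule_gives_lie_two_algebra
    {H G : Type*} [LieRing H] [LieAlgebra ℝ H] [LieRing G] [LieAlgebra ℝ G]
    (φ : H →ₗ⁅ℝ⁆ G) (ρ : G →ₗ[ℝ] H →ₗ[ℝ] H)
    (hder : ∀ (x : G) (a b : H), ρ x ⁅a, b⁆ = ⁅ρ x a, b⁆ + ⁅a, ρ x b⁆)
    (hact : ∀ (x y : G) (a : H), ρ ⁅x, y⁆ a = ρ x (ρ y a) - ρ y (ρ x a))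
    (hequiv : ∀ (x : G) (a : H), φ (ρ x a) = ⁅x, φ a⁆)
    (hpeiffer : ∀ a b : H, ρ (φ a) b = ⁅a, b⁆)
    -- the semidirect product bracket, and the groupoid structure maps
    (br : (H × G) → (H × G) → (H × G))
    (hbr : ∀ p q, br p q = (⁅p.1, q.1⁆ + ρ p.2 q.1 - ρ q.2 p.1, ⁅p.2, q.2⁆))
    (s t : (H × G) → G) (u : G → H × G) (m : (H × G) → (H × G) → (H × G))
    (hs : ∀ p, s p = p.2) (ht : ∀ p, t p = φ p.1 + p.2)
    (hu : ∀ x, u x = ((0 : H), x)) (hm : ∀ p q, m p q = (p.1 + q.1, q.2)) :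
    -- `br` is a Lie bracket (skew-symmetry and the Leibniz/Jacobi identity)
    ((∀ p, br p p = 0) ∧
     (∀ p q, br p q = - br q p) ∧
     (∀ p q r, br p (br q r) = br (br p q) r + br q (br p r))) ∧
    -- the groupoid axioms hold (on composable pairs, composability being `s p = t q`)
    ((∀ x, s (u x) = x) ∧ (∀ x, t (u x) = x) ∧
     (∀ p q, s p = t q → s (m p q) = s q) ∧
     (∀ p q, s p = t q → t (m p q) = t p) ∧
     (∀ p, m p (u (s p)) = p) ∧ (∀ p, m (u (t p)) p = p) ∧
     (∀ p q r, s p = t q → s q = t r → m (m p q) r = m p (m q r)) ∧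
     (∀ p, ∃ i : H × G, s i = t p ∧ t i = s p ∧ m p i = u (t p) ∧ m i p = u (s p))) ∧
    -- all structure maps are Lie algebra morphisms
    ((∀ p q, s (br p q) = ⁅s p, s q⁆) ∧
     (∀ p q, t (br p q) = ⁅t p, t q⁆) ∧
     (∀ x y : G, u ⁅x, y⁆ = br (u x) (u y)) ∧
     (∀ p q p' q', s p = t q → s p' = t q' →
       s (br p p') = t (br q q') ∧ m (br p p') (br q q') = br (m p q) (m p' q'))) := by
  obtain rfl : br = semidirectBracket ρ := funext₂ hbr
  obtain rfl : s = Prod.snd := funext hs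
  obtain rfl : t = groupoidTarget φ := funext ht
  obtain rfl : u = fun x ↦ (0, x) := funext hu
  obtain rfl : m = groupoidComp := funext₂ hm
  refine ⟨⟨semidirectBracket_self ρ, semidirectBracket_anticomm ρ,
      semidirectBracket_leibniz hder hact⟩,
    ⟨fun _ ↦ rfl, fun _ ↦ by simp [groupoidTarget], fun _ _ _ ↦ rfl,
      fun _ _ ↦ groupoidTarget_groupoidComp,
      fun _ ↦ by simp [groupoidComp], fun _ ↦ by simp [groupoidComp],
      fun _ _ _ _ _ ↦ by simp [groupoidComp, add_assoc],
      fun p ↦ ⟨(-p.1, groupoidTarget φ p), rfl, by simp [groupoidTarget],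
        by simp [groupoidComp], by simp [groupoidComp]⟩⟩,
    fun _ _ ↦ rfl, groupoidTarget_semidirectBracket hequiv,
    fun _ _ ↦ by simp [semidirectBracket],
    fun p q p' q' h h' ↦ ⟨?_, groupoidComp_semidirectBracket hpeiffer h h'⟩⟩
  rw [groupoidTarget_semidirectBracket hequiv, ← h, ← h']
  rfl
end

section
/- Let 𝒢 : H ⋊ G ⇉ G be a strict Lie 2-group associated to a crossed module of Lie groups Φ : H → G with G acting on H, and let 𝔊* be the dual of its Lie 2-algebra, with arrow space (𝔥 ⋊ 𝔤)* and object space 𝔥*. Define the coadjoint action of 𝒢 on 𝔊* by the right coadjoint action of H ⋊ G on (𝔥 ⋊ 𝔤)* at the level of arrows, and by the dual of the G-action on 𝔥 at the level of objects. Then the action map 𝔊* × 𝒢 → 𝔊* is a groupoid morphism (with the product groupoid structure on 𝔊* × 𝒢), i.e. the coadjoint action is multiplicative. -/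
open Module

/-- Let `𝒢 : H ⋊ G ⇉ G` be the strict Lie 2-group of a crossed module, with
Lie 2-algebra `𝔊 : 𝔥 ⋊ 𝔤 ⇉ 𝔤` and dual groupoid `𝔊* : (𝔥 ⋊ 𝔤)* ≅ 𝔥* × 𝔤* ⇉ 𝔥*`.  The
coadjoint action — the (right, infinitesimal) coadjoint action of `𝔥 ⋊ 𝔤` on `(𝔥 ⋊ 𝔤)*` at the
level of arrows, and the dual of the `𝔤`-action on `𝔥` at the level of objects — is
multiplicative: the action map `𝔊* × 𝔊 → 𝔊*` is a groupoid morphism for the product groupoid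
structure on `𝔊* × 𝔊` (compatibility with sources, targets, units, and multiplications). -/
theorem coadjoint_action_of_lie_two_algebra_is_multiplicative
    {H G : Type*} [LieRing H] [LieAlgebra ℝ H] [LieRing G] [LieAlgebra ℝ G]
    [FiniteDimensional ℝ H] [FiniteDimensional ℝ G]
    (φ : H →ₗ⁅ℝ⁆ G) (ρ : G →ₗ[ℝ] H →ₗ[ℝ] H)
    (hder : ∀ (x : G) (a b : H), ρ x ⁅a, b⁆ = ⁅ρ x a, b⁆ + ⁅a, ρ x b⁆)
    (hact : ∀ (x y : G) (a : H), ρ ⁅x, y⁆ a = ρ x (ρ y a) - ρ y (ρ x a))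
    (hequiv : ∀ (x : G) (a : H), φ (ρ x a) = ⁅x, φ a⁆)
    (hpeiffer : ∀ a b : H, ρ (φ a) b = ⁅a, b⁆) :
    -- the dual groupoid `𝔊* : 𝔥* × 𝔤* ⇉ 𝔥*`
    let sd : Dual ℝ H × Dual ℝ G → Dual ℝ H := fun Ξ => Ξ.1 - φ.toLinearMap.dualMap Ξ.2
    let td : Dual ℝ H × Dual ℝ G → Dual ℝ H := fun Ξ => Ξ.1
    let md : (Dual ℝ H × Dual ℝ G) → (Dual ℝ H × Dual ℝ G) → (Dual ℝ H × Dual ℝ G) :=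
      fun Ξ Ξ' => (Ξ.1, Ξ.2 + Ξ'.2)
    -- the Lie 2-algebra groupoid `𝔊 : 𝔥 ⋊ 𝔤 ⇉ 𝔤`
    let sg : H × G → G := fun X => X.2
    let tg : H × G → G := fun X => φ X.1 + X.2
    let mg : (H × G) → (H × G) → (H × G) := fun X Y => (X.1 + Y.1, Y.2)
    -- arrow-level map: the right coadjoint action of `𝔥 ⋊ 𝔤` on `(𝔥 ⋊ 𝔤)* ≅ 𝔥* × 𝔤*`,
    -- `⟨ad*_{(a,x)} (α,θ), (b,y)⟩ = −⟨(α,θ), [(a,x),(b,y)]⟩`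
    let A : (Dual ℝ H × Dual ℝ G) → (H × G) → (Dual ℝ H × Dual ℝ G) :=
      fun Ξ X =>
        (-(Ξ.1 ∘ₗ (((LieAlgebra.ad ℝ H X.1 : H →ₗ[ℝ] H)) + ρ X.2)),
          Ξ.1 ∘ₗ (ρ.flip X.1) - Ξ.2 ∘ₗ (LieAlgebra.ad ℝ G X.2 : G →ₗ[ℝ] G))
    -- object-level map: the dual of the `𝔤`-action on `𝔥`
    let A₀ : Dual ℝ H → G → Dual ℝ H := fun α x => -(α ∘ₗ ρ x)
    -- the action map is a groupoid morphism:
    -- (compatibility with targets)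
    (∀ Ξ X, td (A Ξ X) = A₀ (td Ξ) (tg X)) ∧
    -- (compatibility with sources)
    (∀ Ξ X, sd (A Ξ X) = A₀ (sd Ξ) (sg X)) ∧
    -- (compatibility with units)
    (∀ (α : Dual ℝ H) (x : G), A (α, (0 : Dual ℝ G)) ((0 : H), x) = (A₀ α x, 0)) ∧
    -- (compatibility with multiplications, on composable pairs)
    (∀ Ξ Ξ' X Y, sd Ξ = td Ξ' → sg X = tg Y →
       A (md Ξ Ξ') (mg X Y) = md (A Ξ X) (A Ξ' Y)) := by

  intro sd td md sg tg mg A A₀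
  refine ⟨?_, ?_, ?_, ?_⟩
  · intro Ξ X
    simp only [td, A, A₀, tg]
    ext b
    simp [hpeiffer]
  · intro Ξ X
    simp only [sd, A, A₀, sg]
    ext b
    simp [hpeiffer, hequiv, LinearMap.dualMap_apply]
    rw [← lie_skew X.1 b, map_neg]
    ring
  · intro α x
    simp only [A, A₀]
    ext b <;> simp
  · intro Ξ Ξ' X Y hΞ hX
    simp only [sd, td] at hΞ
    simp only [sg, tg] at hX
    simp only [A, md, mg]
    refine Prod.ext ?_ ?_
    · ext b
      simp [hX, hpeiffer]
      ring
    · ext y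
      simp [hX, hΞ, hpeiffer, hequiv, LinearMap.dualMap_apply]
      have h' : Ξ'.1 (ρ y Y.1) = Ξ.1 (ρ y Y.1) - Ξ.2 (φ (ρ y Y.1)) := by
        rw [← hΞ]; simp
      rw [h', hequiv, ← lie_skew (φ Y.1) y, map_neg]
      ring
end

section
/- Let M₁ ⇉ M₀ be a groupoid and let Π be a bivector on M₁, so that for each arrow g the induced linear map Π_g = Π♯_g : T*_g M₁ → T_g M₁ is skew: ⟨ξ, Π_g η⟩ = −⟨η, Π_g ξ⟩. Suppose Π♯ is a groupoid morphism from the cotangent groupoid T*M₁ ⇉ A* to the tangent groupoid TM₁ ⇉ TM₀, where the cotangent multiplication m̂ is characterized by ⟨m̂(ξ, η), Tm(u, v)⟩ = ⟨ξ, u⟩ + ⟨η, v⟩ for composable tangent vectors u, v and covectors ξ, η. Then the graph of the groupoid multiplication m is coisotropic with respect to Π ⊕ Π ⊖ Π: for every (ξ, η, ζ) annihilating the tangent space of the graph of m at a composable pair, the vector (Π♯ξ, Π♯η, −Π♯ζ) is tangent to the graph of m. -/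
open Module

/-- linear/pointwise 'if' direction of the Mackenzie–Xu theorem.  In the
linear-algebraic model at a fixed composable pair `(g, h)` with product `gh`: tangent spaces
`Vg, Vh, Vgh, V0`, the differentials `Tsg : Vg → V0`, `Tth : Vh → V0`, a tangent
multiplication `Tm` surjective on composable pairs, skew bivectors `Pg, Ph, Pgh`, and the
cotangent multiplication `m̂` characterized by `⟨m̂(ξ,η), Tm(u,v)⟩ = ⟨ξ,u⟩ + ⟨η,v⟩`.  If
`Π♯` is a groupoid morphism (it sends cotangent-composable covectors to tangent-composable
vectors and intertwines the multiplications), then the graph of `m` is coisotropic for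
`Π ⊕ Π ⊖ Π`: whenever `(ξ, η, ζ)` annihilates the tangent space of the graph of `m`, the
vector `(Π♯ξ, Π♯η, −Π♯ζ)` is tangent to the graph of `m`. -/
theorem bivector_groupoid_morphism_implies_graph_coisotropic
    (Vg Vh Vgh V0 : Type*)
    [AddCommGroup Vg] [Module ℝ Vg] [FiniteDimensional ℝ Vg]
    [AddCommGroup Vh] [Module ℝ Vh] [FiniteDimensional ℝ Vh]
    [AddCommGroup Vgh] [Module ℝ Vgh] [FiniteDimensional ℝ Vgh]
    [AddCommGroup V0] [Module ℝ V0] [FiniteDimensional ℝ V0]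
    (Tsg : Vg →ₗ[ℝ] V0) (Tth : Vh →ₗ[ℝ] V0) (Tm : Vg × Vh →ₗ[ℝ] Vgh)
    -- composability of tangent vectors
    (TanComp : Vg → Vh → Prop) (hTanComp : ∀ u v, TanComp u v ↔ Tsg u = Tth v)
    -- `Tm` is surjective on composable pairs
    (hTmSurj : ∀ w : Vgh, ∃ u v, TanComp u v ∧ Tm (u, v) = w)
    -- the bivectors, skew-symmetric
    (Pg : Dual ℝ Vg →ₗ[ℝ] Vg) (Ph : Dual ℝ Vh →ₗ[ℝ] Vh) (Pgh : Dual ℝ Vgh →ₗ[ℝ] Vgh)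
    (hPg : ∀ ξ ξ' : Dual ℝ Vg, ξ (Pg ξ') = - ξ' (Pg ξ))
    (hPh : ∀ η η' : Dual ℝ Vh, η (Ph η') = - η' (Ph η))
    (hPgh : ∀ ζ ζ' : Dual ℝ Vgh, ζ (Pgh ζ') = - ζ' (Pgh ζ))
    -- composability of covectors: existence of a common "product" functional
    (CotComp : Dual ℝ Vg → Dual ℝ Vh → Prop)
    (hCotComp : ∀ ξ η, CotComp ξ η ↔
      ∃ ζ : Dual ℝ Vgh, ∀ u v, TanComp u v → ζ (Tm (u, v)) = ξ u + η v)
    -- the cotangent multiplication `m̂`, characterized by the pairing identity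
    (mhat : Dual ℝ Vg → Dual ℝ Vh → Dual ℝ Vgh)
    (hmhat : ∀ ξ η, CotComp ξ η → ∀ u v, TanComp u v →
      mhat ξ η (Tm (u, v)) = ξ u + η v)
    -- `Π♯` is a groupoid morphism
    (hmorph : ∀ ξ η, CotComp ξ η →
      TanComp (Pg ξ) (Ph η) ∧ Pgh (mhat ξ η) = Tm (Pg ξ, Ph η)) :
    -- conclusion: coisotropicity of the graph of the multiplication
    ∀ (ξ : Dual ℝ Vg) (η : Dual ℝ Vh) (ζ : Dual ℝ Vgh),
      (∀ u v, TanComp u v → ξ u + η v + ζ (Tm (u, v)) = 0) →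
      TanComp (Pg ξ) (Ph η) ∧ Tm (Pg ξ, Ph η) = - Pgh ζ := by
  intro ξ η ζ hann
  have hcc : CotComp ξ η := by
    rw [hCotComp]
    exact ⟨-ζ, fun u v huv => by have := hann u v huv; simp; linarith⟩
  obtain ⟨hc, heq⟩ := hmorph ξ η hcc
  have hm : mhat ξ η = -ζ := by
    ext w
    obtain ⟨u, v, huv, rfl⟩ := hTmSurj w
    have h1 := hmhat ξ η hcc u v huv
    have h2 := hann u v huv
    simp only [LinearMap.neg_apply] at *
    linarith
  refine ⟨hc, ?_⟩
  rw [← heq, hm, map_neg]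
end
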